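/- arXiv:2006.07227 — 3 statements merged into one kernel-verified Lean document; each statement's English description precedes it below -/
import Mathlib

section
/- Let Q ∈ Sym(ℝ²) be a sign-indefinite symmetric 2×2 real matrix (i.e., Q has one positive and one negative eigenvalue). Then there exist vectors θ₁, θ₂ ∈ ℝ² \ {0}, with θ₂ not a scalar multiple of θ₁, such that Q = θ₁θ₂ᵀ + θ₂θ₁ᵀ. -/
/-!
The quadratic form of `Q = !![a, b; b, c]` satisfies the Lagrange-type identity
`q(x) q(y) - B(x, y)² = det Q · (x₀y₁ - x₁y₀)²`, so a form taking both signs has `det Q < 0`,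
i.e. `a c < b²`. Then `a X² + 2 b X Y + c Y²` splits over `ℝ` as `2 ℓ₁ ℓ₂` with linear forms
`ℓᵢ = θᵢ 0 X + θᵢ 1 Y`, which is `Q = θ₁θ₂ᵀ + θ₂θ₁ᵀ`. For any such splitting
`det Q = -(θ₁ 0 θ₂ 1 - θ₁ 1 θ₂ 0)²`, so `det Q < 0` forces `θ₁, θ₂` to be linearly independent.
-/

open Matrix

theorem exists_mul_add_mul_eq_of_mul_le_sq {a b c : ℝ} (h : a * c ≤ b ^ 2) :
    ∃ p q r s : ℝ, 2 * p * r = a ∧ p * s + q * r = b ∧ 2 * q * s = c := by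
  rcases eq_or_ne a 0 with rfl | ha
  · exact ⟨0, 1, b, c / 2, by ring, by ring, by ring⟩
  · -- `a X² + 2 b X Y + c Y² = (a X + (b + d) Y) (a X + (b - d) Y) / a` with `d² = b² - a c`
    obtain ⟨d, hd⟩ : ∃ d : ℝ, d ^ 2 = b ^ 2 - a * c :=
      ⟨√(b ^ 2 - a * c), Real.sq_sqrt (by linarith)⟩
    refine ⟨a, b + d, 1 / 2, (b - d) / (2 * a), by ring, by field_simp; ring, ?_⟩
    field_simp
    linear_combination -hd

namespace Matrix

theorem IsSymm.dotProduct_mulVec_mul_sub_sq_fin_two {R : Type*} [CommRing R]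
    {Q : Matrix (Fin 2) (Fin 2) R} (hQ : Q.IsSymm) (x y : Fin 2 → R) :
    (x ⬝ᵥ (Q *ᵥ x)) * (y ⬝ᵥ (Q *ᵥ y)) - (x ⬝ᵥ (Q *ᵥ y)) ^ 2 =
      Q.det * (x 0 * y 1 - x 1 * y 0) ^ 2 := by
  simp only [dotProduct, mulVec, Fin.sum_univ_two, det_fin_two, hQ.apply 0 1]
  ring

theorem IsSymm.det_neg_of_indefinite {Q : Matrix (Fin 2) (Fin 2) ℝ} (hQ : Q.IsSymm)
    {x y : Fin 2 → ℝ} (hx : 0 < x ⬝ᵥ (Q *ᵥ x)) (hy : y ⬝ᵥ (Q *ᵥ y) < 0) : Q.det < 0 := by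
  by_contra! hdet
  have hprod := hQ.dotProduct_mulVec_mul_sub_sq_fin_two x y
  nlinarith [mul_neg_of_pos_of_neg hx hy, sq_nonneg (x ⬝ᵥ (Q *ᵥ y)),
    mul_nonneg hdet (sq_nonneg (x 0 * y 1 - x 1 * y 0))]

theorem det_vecMulVec_add_vecMulVec_fin_two {R : Type*} [CommRing R] (u v : Fin 2 → R) :
    (vecMulVec u v + vecMulVec v u).det = -(u 0 * v 1 - u 1 * v 0) ^ 2 := by
  simp only [det_fin_two, add_apply, vecMulVec_apply]
  ring

theorem IsSymm.exists_eq_vecMulVec_add_vecMulVec {Q : Matrix (Fin 2) (Fin 2) ℝ}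
    (hQ : Q.IsSymm) (hdet : Q.det ≤ 0) :
    ∃ θ₁ θ₂ : Fin 2 → ℝ, Q = vecMulVec θ₁ θ₂ + vecMulVec θ₂ θ₁ := by
  rw [det_fin_two, hQ.apply 0 1] at hdet
  obtain ⟨p, q, r, s, h00, h01, h11⟩ :=
    exists_mul_add_mul_eq_of_mul_le_sq (a := Q 0 0) (b := Q 0 1) (c := Q 1 1) (by linarith)
  refine ⟨![p, q], ![r, s], ?_⟩
  ext i j
  fin_cases i <;> fin_cases j <;> simp [hQ.apply 0 1] <;> linarith

end Matrix

theorem ne_smul_of_mul_sub_mul_ne_zero {R : Type*} [CommRing R] {u v : Fin 2 → R}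
    (h : u 0 * v 1 - u 1 * v 0 ≠ 0) (c : R) :
    v ≠ c • u := by
  rintro rfl
  simp only [Pi.smul_apply, smul_eq_mul] at h
  exact h (by ring)

/-- Any sign-indefinite symmetric 2×2 real matrix `Q` (i.e., one taking both
positive and negative values as a quadratic form, equivalently having one
positive and one negative eigenvalue) can be written as
`Q = θ₁θ₂ᵀ + θ₂θ₁ᵀ` with `θ₁, θ₂ ≠ 0` and `θ₂` not a scalar multiple of `θ₁`. -/
theorem stmt_6 (Q : Matrix (Fin 2) (Fin 2) ℝ) (hQ : Q.IsSymm)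
    (hpos : ∃ x : Fin 2 → ℝ, 0 < x ⬝ᵥ (Q *ᵥ x))
    (hneg : ∃ y : Fin 2 → ℝ, y ⬝ᵥ (Q *ᵥ y) < 0) :
    ∃ θ₁ θ₂ : Fin 2 → ℝ, θ₁ ≠ 0 ∧ θ₂ ≠ 0 ∧ (∀ c : ℝ, θ₂ ≠ c • θ₁) ∧
      Q = vecMulVec θ₁ θ₂ + vecMulVec θ₂ θ₁ := by
  obtain ⟨x, hx⟩ := hpos
  obtain ⟨y, hy⟩ := hneg
  have hdet : Q.det < 0 := hQ.det_neg_of_indefinite hx hy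
  obtain ⟨θ₁, θ₂, rfl⟩ := hQ.exists_eq_vecMulVec_add_vecMulVec hdet.le
  have hind : θ₁ 0 * θ₂ 1 - θ₁ 1 * θ₂ 0 ≠ 0 := by
    rw [det_vecMulVec_add_vecMulVec_fin_two] at hdet
    exact fun h0 => by simp [h0] at hdet
  refine ⟨θ₁, θ₂, ?_, by simpa using ne_smul_of_mul_sub_mul_ne_zero hind 0,
    ne_smul_of_mul_sub_mul_ne_zero hind, rfl⟩
  rintro rfl
  simp at hind
end

section
/- Let V₁,…,V_K : D → ℝ be continuous on an open set D ⊆ ℝⁿ and V ∈ Mm(V₁,…,V_K). For each x ∈ D, the essentially-active index set α_V(x) is nonempty, and there exists a neighborhood U of x such that for every z ∈ U there is ℓ_z ∈ α_V(x) with V(z) = V_{ℓ_z}(z). -/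
/-!
Each `C ℓ = {z ∈ D | V z = V_ℓ z}` is closed relative to `D`, and the finitely many `C ℓ` cover
`D` because a max-min of finitely many values is one of them. By Baire's theorem the interiors of
the `C ℓ` are then dense in `D`, so every point of `D` lies in `closure (interior (C ℓ))` for some
`ℓ`. Near `x` only the closed sets `closure (interior (C ℓ))` that contain `x` can be met, and on
`D` such a set lies inside `C ℓ`.
-/

open Set Filter Topology

theorem Finset.exists_sup'_inf'_eq {ι κ α : Type*} [LinearOrder α] {s : Finset ι}
    (hs : s.Nonempty) {t : ι → Finset κ} (ht : ∀ j, (t j).Nonempty) (f : κ → α) :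
    ∃ k, s.sup' hs (fun j => (t j).inf' (ht j) f) = f k := by
  obtain ⟨j, -, hj⟩ := Finset.exists_mem_eq_sup' hs fun j => (t j).inf' (ht j) f
  obtain ⟨k, -, hk⟩ := Finset.exists_mem_eq_inf' (ht j) f
  exact ⟨k, hj.trans hk⟩

theorem ContinuousOn.inter_closure_eqLocus_subset {X Y : Type*} [TopologicalSpace X]
    [TopologicalSpace Y] [T2Space Y] {D : Set X} {f g : X → Y} (hf : ContinuousOn f D)
    (hg : ContinuousOn g D) :
    D ∩ closure {z | z ∈ D ∧ f z = g z} ⊆ {z | z ∈ D ∧ f z = g z} := fun _ hz =>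
  ⟨hz.1, Set.EqOn.of_subset_closure (fun _ hw => hw.2) (hf.mono inter_subset_left)
    (hg.mono inter_subset_left) (fun _ hw => ⟨hw.1, subset_closure hw⟩) inter_subset_right hz⟩

theorem IsOpen.subset_closure_iUnion_interior {X ι : Type*} [TopologicalSpace X] [BaireSpace X]
    [Countable ι] {D : Set X} (hD : IsOpen D) {C : ι → Set X} (hcov : D ⊆ ⋃ i, C i)
    (hrel : ∀ i, D ∩ closure (C i) ⊆ C i) : D ⊆ closure (⋃ i, interior (C i)) := by
  let f : Option ι → Set X := fun j => j.elim Dᶜ fun i => closure (C i ∩ D)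
  have hf_closed : ∀ j, IsClosed (f j) := by
    rintro (_ | i)
    exacts [hD.isClosed_compl, isClosed_closure]
  have hf_cover : ⋃ j, f j = univ := by
    refine eq_univ_of_forall fun z => ?_
    by_cases hz : z ∈ D
    · obtain ⟨i, hi⟩ := mem_iUnion.1 (hcov hz)
      exact mem_iUnion.2 ⟨some i, subset_closure ⟨hi, hz⟩⟩
    · exact mem_iUnion.2 ⟨none, hz⟩
  have hdense := dense_iUnion_interior_of_closed hf_closed hf_cover
  intro y hy
  refine mem_closure_iff.2 fun O hO hyO => ?_
  obtain ⟨z, ⟨hzO, hzD⟩, hz⟩ := hdense.inter_open_nonempty _ (hO.inter hD) ⟨y, hyO, hy⟩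
  obtain ⟨_ | i, hzi⟩ := mem_iUnion.1 hz
  · exact absurd hzD (interior_subset hzi)
  · have hsub : D ∩ interior (f (some i)) ⊆ C i := fun w hw =>
      hrel i ⟨hw.1, closure_mono inter_subset_left (interior_subset hw.2)⟩
    exact ⟨z, hzO, mem_iUnion.2 ⟨i, interior_maximal hsub (hD.inter isOpen_interior) ⟨hzD, hzi⟩⟩⟩

theorem eventually_forall_mem_imp_mem_of_isClosed {X ι : Type*} [TopologicalSpace X] [Finite ι]
    {A : ι → Set X} (hA : ∀ i, IsClosed (A i)) (x : X) :
    ∀ᶠ z in 𝓝 x, ∀ i, z ∈ A i → x ∈ A i := by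
  refine eventually_all.2 fun i => ?_
  by_cases hx : x ∈ A i
  · exact Eventually.of_forall fun _ _ => hx
  · filter_upwards [(hA i).isOpen_compl.mem_nhds hx] with z hz h using absurd h hz

/-- Lemma 4.1: for a max-min combination `V` of continuous functions on an open
set `D`, at each `x ∈ D` the essentially-active index set
`α_V(x) = {ℓ : x ∈ closure (interior (C ℓ))}` is nonempty, and on some
neighborhood `U ⊆ D` of `x` the function `V` is locally described by its
essentially-active components: every `z ∈ U` satisfies `V z = Vb ℓ_z z` for
some `ℓ_z ∈ α_V(x)`. -/
theorem stmt_11 {n K J : ℕ} (hJ : 0 < J)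
    (D : Set (Fin n → ℝ)) (hD : IsOpen D)
    (Vb : Fin K → (Fin n → ℝ) → ℝ) (hVb : ∀ k, ContinuousOn (Vb k) D)
    (S : Fin J → Finset (Fin K)) (hS : ∀ j, (S j).Nonempty)
    (V : (Fin n → ℝ) → ℝ)
    (hV : ∀ x, V x = Finset.univ.sup'
        (Finset.univ_nonempty_iff.mpr (Fin.pos_iff_nonempty.mp hJ))
        (fun j => (S j).inf' (hS j) (fun k => Vb k x)))
    (x : Fin n → ℝ) (hx : x ∈ D) :
    {ℓ : Fin K | x ∈ closure (interior {z | z ∈ D ∧ V z = Vb ℓ z})}.Nonempty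
    ∧ ∃ U ∈ nhds x, U ⊆ D ∧ ∀ z ∈ U,
        ∃ ℓ, x ∈ closure (interior {w | w ∈ D ∧ V w = Vb ℓ w}) ∧ V z = Vb ℓ z := by
  set C : Fin K → Set (Fin n → ℝ) := fun ℓ => {z | z ∈ D ∧ V z = Vb ℓ z}
  have hVc : ContinuousOn V D :=
    (ContinuousOn.finset_sup'_apply _ fun j _ =>
      ContinuousOn.finset_inf'_apply (hS j) fun k _ => hVb k).congr fun z _ => hV z
  have hrel : ∀ ℓ, D ∩ closure (C ℓ) ⊆ C ℓ := fun ℓ => hVc.inter_closure_eqLocus_subset (hVb ℓ)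
  have hcov : D ⊆ ⋃ ℓ, C ℓ := fun z hz => by
    obtain ⟨ℓ, hℓ⟩ := Finset.exists_sup'_inf'_eq _ hS fun k => Vb k z
    exact mem_iUnion.2 ⟨ℓ, hz, (hV z).trans hℓ⟩
  have hactive : ∀ z ∈ D, ∃ ℓ, z ∈ closure (interior (C ℓ)) := by
    simpa only [closure_iUnion_of_finite, subset_def, mem_iUnion]
      using hD.subset_closure_iUnion_interior hcov hrel
  refine ⟨hactive x hx, {z | z ∈ D ∧ ∀ ℓ, z ∈ closure (interior (C ℓ)) →
    x ∈ closure (interior (C ℓ))}, inter_mem (hD.mem_nhds hx)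
    (eventually_forall_mem_imp_mem_of_isClosed (fun _ => isClosed_closure) x),
    fun z hz => hz.1, fun z ⟨hzD, hz⟩ => ?_⟩
  obtain ⟨ℓ, hzℓ⟩ := hactive z hzD
  exact ⟨ℓ, hz ℓ hzℓ, (hrel ℓ ⟨hzD, closure_mono interior_subset hzℓ⟩).2⟩
end

section
/- Let Q = diag(1,1,-1), A₁ = [[-0.1,-1,0],[1,-0.1,0],[0,0,0.2]], A₂ = [[-0.2,1,0.1],[-1,-0.2,0],[0.1,0,-0.1]]. Then for every nonzero z ∈ ℝ³ with zᵀQz = 0 (i.e., z₃² = z₁² + z₂²), one has (zᵀQA₁z)·(zᵀQA₂z) > 0. -/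
/-!
On the cone `z₀² + z₁² = z₂²` both quadratic forms reduce to negative multiples of `z₂²`:
the off-diagonal entries of `QA₁` and `QA₂` pair off skew-symmetrically, leaving
`zᵀQA₁z = -(z₀² + z₁²)/10 - z₂²/5 = -3z₂²/10` and `zᵀQA₂z = -(z₀² + z₁²)/5 + z₂²/10 = -z₂²/10`.
Their product is `3z₂⁴/100`, and `z₂ ≠ 0` because the only point of the cone with `z₂ = 0` is `0`.
-/

open Matrix

lemma dotProduct_lorentz_mulVec (z : Fin 3 → ℝ) :
    z ⬝ᵥ (!![(1 : ℝ), 0, 0; 0, 1, 0; 0, 0, -1] *ᵥ z) = z 0 ^ 2 + z 1 ^ 2 - z 2 ^ 2 := by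
  simp only [dotProduct, mulVec, of_apply, cons_val', cons_val_fin_one, Fin.sum_univ_three,
    cons_val_zero, cons_val_one, cons_val]
  ring

lemma dotProduct_lorentz_mulVec_A₁ (z : Fin 3 → ℝ) :
    z ⬝ᵥ (!![(1 : ℝ), 0, 0; 0, 1, 0; 0, 0, -1] *ᵥ
      (!![(-0.1 : ℝ), -1, 0; 1, -0.1, 0; 0, 0, 0.2] *ᵥ z)) =
      -(z 0 ^ 2 + z 1 ^ 2) / 10 - z 2 ^ 2 / 5 := by
  simp only [dotProduct, mulVec, of_apply, cons_val', cons_val_fin_one, Fin.sum_univ_three,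
    cons_val_zero, cons_val_one, cons_val]
  ring

lemma dotProduct_lorentz_mulVec_A₂ (z : Fin 3 → ℝ) :
    z ⬝ᵥ (!![(1 : ℝ), 0, 0; 0, 1, 0; 0, 0, -1] *ᵥ
      (!![(-0.2 : ℝ), 1, 0.1; -1, -0.2, 0; 0.1, 0, -0.1] *ᵥ z)) =
      -(z 0 ^ 2 + z 1 ^ 2) / 5 + z 2 ^ 2 / 10 := by
  simp only [dotProduct, mulVec, of_apply, cons_val', cons_val_fin_one, Fin.sum_univ_three,
    cons_val_zero, cons_val_one, cons_val]
  ring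

lemma apply_two_ne_zero_of_cone {z : Fin 3 → ℝ} (hz : z ≠ 0)
    (hcone : z 0 ^ 2 + z 1 ^ 2 = z 2 ^ 2) : z 2 ≠ 0 := by
  intro h2
  have h0 : z 0 = 0 := by nlinarith [sq_nonneg (z 0), sq_nonneg (z 1)]
  have h1 : z 1 = 0 := by nlinarith [sq_nonneg (z 0), sq_nonneg (z 1)]
  exact hz (funext fun i => by fin_cases i <;> assumption)

/-- No-sliding condition for Example 6.2: on the cone `zᵀQz = 0` (i.e.
`z₃² = z₁² + z₂²`), `z ≠ 0`, the quantities `zᵀQA₁z` and `zᵀQA₂z` have the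
same strict sign: their product is positive. -/
theorem stmt_16
    (Q A₁ A₂ : Matrix (Fin 3) (Fin 3) ℝ)
    (hQ : Q = !![(1 : ℝ), 0, 0; 0, 1, 0; 0, 0, -1])
    (hA₁ : A₁ = !![(-0.1 : ℝ), -1, 0; 1, -0.1, 0; 0, 0, 0.2])
    (hA₂ : A₂ = !![(-0.2 : ℝ), 1, 0.1; -1, -0.2, 0; 0.1, 0, -0.1])
    (z : Fin 3 → ℝ) (hz : z ≠ 0) (hcone : z ⬝ᵥ (Q *ᵥ z) = 0) :
    0 < (z ⬝ᵥ (Q *ᵥ (A₁ *ᵥ z))) * (z ⬝ᵥ (Q *ᵥ (A₂ *ᵥ z))) := by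
  subst hQ hA₁ hA₂
  rw [dotProduct_lorentz_mulVec, sub_eq_zero] at hcone
  rw [dotProduct_lorentz_mulVec_A₁, dotProduct_lorentz_mulVec_A₂, hcone]
  have h2 := apply_two_ne_zero_of_cone hz hcone
  calc (0 : ℝ) < 3 / 100 * z 2 ^ 4 := by positivity
    _ = _ := by ring
end
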